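/- For every p > 1 and every L > 0, the one-dimensional solution u_{p,L} is nondegenerate: if z is a C² function on [0,L] satisfying the linearized equation -z'' = p·u_{p,L}^{p-1}·z on (0,L) together with z'(0) = 0 and z(L) = 0, then z is identically zero on [0,L]. -/

import Mathlib

open Real Set Filter Topology

noncomputable section

/-- `u` is the (unique) positive solution of the one-dimensional Lane–Emden problem
`-u'' = u^p` on `(0,L)` with `u > 0` on `[0,L)`, `u'(0) = 0` and `u(L) = 0`. -/
def IsLaneEmdenL (p L : ℝ) (u : ℝ → ℝ) : Prop :=
  ContDiff ℝ 2 u ∧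
  (∀ t ∈ Ioo (0 : ℝ) L, deriv (deriv u) t = -(u t ^ p)) ∧
  (∀ t ∈ Ico (0 : ℝ) L, 0 < u t) ∧
  deriv u 0 = 0 ∧ u L = 0

/-!
Differentiating the scaling family `λ^{2/(p-1)} u(λ t)` at `λ = 1` gives a solution
`w = t u' + 2u/(p-1)` of the linearized equation with `w'(0) = 0`. The Wronskian of `z` and `w`
is constant; it vanishes at `0` and equals `-L u'(L) z'(L)` at `L`. Conservation of the energy
`u'^2/2 + u^{p+1}/(p+1)` gives `u'(L)^2/2 = u(0)^{p+1}/(p+1) > 0`, so `z'(L) = 0`. Then `z`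
has zero Cauchy data at `L` and vanishes by uniqueness for the linear ODE.
-/

theorem eq_of_hasDerivAt_zero_of_continuousOn {f : ℝ → ℝ} {a b : ℝ} (hab : a < b)
    (hf : ContinuousOn f (Icc a b)) (hf' : ∀ t ∈ Ioo a b, HasDerivAt f 0 t) : f b = f a := by
  obtain ⟨c, -, hc⟩ := exists_hasDerivAt_eq_slope f (fun _ => 0) hab hf hf'
  rw [eq_comm, div_eq_zero_iff, sub_eq_zero] at hc
  exact hc.resolve_right (sub_ne_zero.2 hab.ne')

theorem ContDiff.differentiable_deriv_of_two {f : ℝ → ℝ} (hf : ContDiff ℝ 2 f) :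
    Differentiable ℝ (deriv f) :=
  (hf.deriv' (n := 1)).differentiable one_ne_zero

theorem ContDiff.continuous_deriv_deriv_of_two {f : ℝ → ℝ} (hf : ContDiff ℝ 2 f) :
    Continuous (deriv (deriv f)) :=
  (hf.deriv' (n := 1)).continuous_deriv le_rfl

section LinearODE

variable {q y y' w w' : ℝ → ℝ} {a b : ℝ}

theorem wronskian_eq_of_hasDerivAt (hab : a < b)
    (hy : ContinuousOn y (Icc a b)) (hy' : ContinuousOn y' (Icc a b))
    (hw : ContinuousOn w (Icc a b)) (hw' : ContinuousOn w' (Icc a b))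
    (hdy : ∀ t ∈ Ioo a b, HasDerivAt y (y' t) t)
    (hdy' : ∀ t ∈ Ioo a b, HasDerivAt y' (-(q t * y t)) t)
    (hdw : ∀ t ∈ Ioo a b, HasDerivAt w (w' t) t)
    (hdw' : ∀ t ∈ Ioo a b, HasDerivAt w' (-(q t * w t)) t) :
    y b * w' b - y' b * w b = y a * w' a - y' a * w a := by
  refine eq_of_hasDerivAt_zero_of_continuousOn (f := fun t => y t * w' t - y' t * w t) hab
    ((hy.mul hw').sub (hy'.mul hw)) fun t ht => ?_
  exact (((hdy t ht).fun_mul (hdw' t ht)).fun_sub ((hdy' t ht).fun_mul (hdw t ht))).congr_deriv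
    (by ring)

theorem eqOn_zero_of_hasDerivAt_of_right (hq : ContinuousOn q (Icc a b))
    (hdy : ∀ t ∈ Icc a b, HasDerivAt y (y' t) t)
    (hdy' : ∀ t ∈ Icc a b, HasDerivAt y' (-(q t * y t)) t)
    (hb : y b = 0) (hb' : y' b = 0) : EqOn y 0 (Icc a b) := by
  obtain ⟨K, hK⟩ := (isCompact_Icc.image_of_continuousOn hq.nnnorm).bddAbove
  set v : ℝ → ℝ × ℝ → ℝ × ℝ := fun t x => (x.2, -q t * x.1)
  have hv : ∀ t ∈ Ioc a b, LipschitzOnWith (max 1 K) (v t) univ := by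
    intro t ht
    have hqt : ‖-q t‖₊ * 1 ≤ K := by simpa using hK ⟨t, Ioc_subset_Icc_self ht, rfl⟩
    exact (LipschitzWith.prod_snd.prodMk ((lipschitzWith_smul (-q t)).comp LipschitzWith.prod_fst)
      |>.weaken (max_le_max le_rfl hqt)).lipschitzOnWith
  have hsol : ∀ t ∈ Ioc a b,
      HasDerivWithinAt (fun s => (y s, y' s)) (v t (y t, y' t)) (Iic t) t := fun t ht => by
    simpa [v] using ((hdy t (Ioc_subset_Icc_self ht)).prodMk
      (hdy' t (Ioc_subset_Icc_self ht))).hasDerivWithinAt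
  have hzero : ∀ t ∈ Ioc a b, HasDerivWithinAt (fun _ => 0) (v t 0) (Iic t) t :=
    fun t _ => (hasDerivWithinAt_const t (Iic t) (0 : ℝ × ℝ)).congr_deriv (by ext <;> simp [v])
  intro t ht
  have := ODE_solution_unique_of_mem_Icc_left hv
    (HasDerivAt.continuousOn fun s hs => (hdy s hs).prodMk (hdy' s hs)) hsol (fun _ _ => trivial)
    continuousOn_const hzero (fun _ _ => trivial) (by simp [hb, hb']) ht
  simpa using congrArg Prod.fst this

end LinearODE

/-- `∂_λ|_{λ=1} λ^{2/(p-1)} u(λ t)`: since `-u'' = u^p` is invariant under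
`u ↦ λ^{2/(p-1)} u(λ ·)`, this solves the linearized equation at `u`. -/
def scalingGenerator (p : ℝ) (u : ℝ → ℝ) (t : ℝ) : ℝ :=
  t * deriv u t + 2 / (p - 1) * u t

section ScalingGenerator

variable {p t : ℝ} {u : ℝ → ℝ}

theorem hasDerivAt_scalingGenerator (hu : ContDiff ℝ 2 u) (ht : deriv (deriv u) t = -(u t ^ p)) :
    HasDerivAt (scalingGenerator p u) ((1 + 2 / (p - 1)) * deriv u t - t * u t ^ p) t := by
  have hu' := (hu.differentiable two_ne_zero t).hasDerivAt
  have hu'' := (hu.differentiable_deriv_of_two t).hasDerivAt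
  rw [ht] at hu''
  exact (((hasDerivAt_id' t).fun_mul hu'').fun_add (hu'.const_mul _)).congr_deriv (by ring)

theorem hasDerivAt_deriv_scalingGenerator (hu : ContDiff ℝ 2 u) (hp : p ≠ 1) (hut : 0 < u t)
    (ht : deriv (deriv u) t = -(u t ^ p)) :
    HasDerivAt (fun s => (1 + 2 / (p - 1)) * deriv u s - s * u s ^ p)
      (-(p * u t ^ (p - 1) * scalingGenerator p u t)) t := by
  have hu' := (hu.differentiable two_ne_zero t).hasDerivAt
  have hu'' := (hu.differentiable_deriv_of_two t).hasDerivAt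
  rw [ht] at hu''
  have hup := hu'.rpow_const (p := p) (Or.inl hut.ne')
  refine ((hu''.const_mul _).fun_sub ((hasDerivAt_id' t).fun_mul hup)).congr_deriv ?_
  have hp' : p - 1 ≠ 0 := sub_ne_zero.2 hp
  rw [scalingGenerator, rpow_sub_one hut.ne']
  field_simp
  ring

end ScalingGenerator

namespace IsLaneEmdenL

variable {p L : ℝ} {u : ℝ → ℝ}

theorem deriv_right_sq_eq (hu : IsLaneEmdenL p L u) (hp : -1 < p) (hL : 0 < L) :
    deriv u L ^ 2 / 2 = u 0 ^ (p + 1) / (p + 1) := by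
  obtain ⟨hu2, hueq, hpos, hu'0, huL⟩ := hu
  have hp' : p + 1 ≠ 0 := by linarith
  have henergy := eq_of_hasDerivAt_zero_of_continuousOn
    (f := fun t => deriv u t ^ 2 / 2 + u t ^ (p + 1) / (p + 1)) hL ?_ fun t ht => ?_
  · simpa [hu'0, huL, zero_rpow hp'] using henergy
  · exact ((((hu2.continuous_deriv one_le_two).pow 2).div_const 2).add
      ((hu2.continuous.rpow_const fun _ => Or.inr (by linarith)).div_const _)).continuousOn
  · have hu' := (hu2.differentiable two_ne_zero t).hasDerivAt
    have hu'' := (hu2.differentiable_deriv_of_two t).hasDerivAt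
    rw [hueq t ht] at hu''
    have hup := hu'.rpow_const (p := p + 1) (Or.inl (hpos t (Ioo_subset_Ico_self ht)).ne')
    refine (((hu''.fun_pow 2).div_const 2).fun_add (hup.div_const _)).congr_deriv ?_
    rw [add_sub_cancel_right]
    field_simp
    ring

theorem deriv_right_ne_zero (hu : IsLaneEmdenL p L u) (hp : -1 < p) (hL : 0 < L) :
    deriv u L ≠ 0 := by
  intro h
  have := hu.deriv_right_sq_eq hp hL
  rw [h, zero_pow two_ne_zero, zero_div, eq_comm, div_eq_zero_iff] at this
  have hu0 : 0 < u 0 := hu.2.2.1 0 ⟨le_rfl, hL⟩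
  exact this.elim (rpow_pos_of_pos hu0 _).ne' fun h => by linarith

/-- The Wronskian of `z` with `scalingGenerator p u` vanishes at `0` and equals
`-L u'(L) z'(L)` at `L`. -/
theorem deriv_right_eq_zero_of_linearized (hu : IsLaneEmdenL p L u) (hp0 : 0 < p) (hp1 : p ≠ 1)
    (hL : 0 < L) {z : ℝ → ℝ} (hz : ContDiff ℝ 2 z)
    (hzeq : ∀ t ∈ Ioo (0 : ℝ) L, -(deriv (deriv z) t) = p * u t ^ (p - 1) * z t)
    (hz0 : deriv z 0 = 0) (hzL : z L = 0) : deriv z L = 0 := by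
  have hu'L := hu.deriv_right_ne_zero (by linarith) hL
  obtain ⟨hu2, hueq, hpos, hu'0, huL⟩ := hu
  have hu'c := hu2.continuous_deriv one_le_two
  have hupc : Continuous fun s => u s ^ p := hu2.continuous.rpow_const fun _ => Or.inr hp0.le
  have hwronskian := wronskian_eq_of_hasDerivAt (q := fun t => p * u t ^ (p - 1)) (y := z)
    (w := scalingGenerator p u) (w' := fun s => (1 + 2 / (p - 1)) * deriv u s - s * u s ^ p) hL
    hz.continuous.continuousOn (hz.continuous_deriv one_le_two).continuousOn
    ((continuous_id.mul hu'c).add (continuous_const.mul hu2.continuous)).continuousOn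
    ((continuous_const.mul hu'c).sub (continuous_id.mul hupc)).continuousOn
    (fun t _ => (hz.differentiable two_ne_zero t).hasDerivAt)
    (fun t ht => by
      rw [← hzeq t ht, neg_neg]; exact (hz.differentiable_deriv_of_two t).hasDerivAt)
    (fun t ht => hasDerivAt_scalingGenerator hu2 (hueq t ht))
    (fun t ht => hasDerivAt_deriv_scalingGenerator hu2 hp1 (hpos t (Ioo_subset_Ico_self ht))
      (hueq t ht))
  simp only [scalingGenerator, hzL, hz0, huL, hu'0, zero_mul, mul_zero, add_zero, zero_sub,
    sub_self, zero_add, neg_eq_zero, mul_eq_zero] at hwronskian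
  exact hwronskian.resolve_right (not_or.2 ⟨hL.ne', hu'L⟩)

end IsLaneEmdenL

/-- Nondegeneracy of the one-dimensional solution `u_{p,L}`: any solution `z` of the
linearized problem `-z'' = p u^(p-1) z` on `(0,L)` with `z'(0) = 0`, `z(L) = 0`
vanishes identically on `[0,L]`. -/
theorem nondegeneracy_of_one_dim_solution
    (p L : ℝ) (hp : 1 < p) (hL : 0 < L)
    (u : ℝ → ℝ) (hu : IsLaneEmdenL p L u)
    (z : ℝ → ℝ) (hz : ContDiff ℝ 2 z)
    (hzeq : ∀ t ∈ Ioo (0 : ℝ) L, -(deriv (deriv z) t) = p * u t ^ (p - 1) * z t)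
    (hz0 : deriv z 0 = 0) (hzL : z L = 0) :
    ∀ t ∈ Icc (0 : ℝ) L, z t = 0 := by
  have hz'L := hu.deriv_right_eq_zero_of_linearized (by linarith) hp.ne' hL hz hzeq hz0 hzL
  have hqc : Continuous fun t => p * u t ^ (p - 1) :=
    continuous_const.mul (hu.1.continuous.rpow_const fun _ => Or.inr (by linarith))
  have hzeq_Icc : EqOn (deriv (deriv z)) (fun t => -(p * u t ^ (p - 1) * z t)) (Icc 0 L) := by
    rw [← closure_Ioo hL.ne]
    refine EqOn.closure (fun t ht => ?_) hz.continuous_deriv_deriv_of_two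
      (hqc.mul hz.continuous).neg
    rw [← hzeq t ht, neg_neg]
  exact eqOn_zero_of_hasDerivAt_of_right hqc.continuousOn
    (fun t _ => (hz.differentiable two_ne_zero t).hasDerivAt)
    (fun t ht => (hz.differentiable_deriv_of_two t).hasDerivAt.congr_deriv (hzeq_Icc ht)) hzL hz'L
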